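/- Fix n ≥ 1, ε ∈ ℝ, A, B, C > 0, reals D₁, …, D_n and d₁, …, d_n, and set 𝕀 = diag(A, B, C). Let Ω, Γ₁, …, Γ_n : ℝ → ℝ³ be differentiable curves with |Γ_i(t)| = 1 for all i, t, and define M(t) = 𝕀Ω(t) + Σ_{i=1}^n D_i (Ω(t) − ⟨Γ_i(t), Ω(t)⟩ Γ_i(t)) and N(t) = Σ_{i=1}^n d_i Γ_i(t). If the curves satisfy the reduced equations Ṁ(t) = M(t) × Ω(t) + (1 − ε) N(t) × Ω(t) and Γ̇_i(t) = ε Γ_i(t) × Ω(t), then d/dt (M(t) + N(t)) = (M(t) + N(t)) × Ω(t), and consequently F₂ = ⟨M(t) + N(t), M(t) + N(t)⟩ is constant in t. -/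

import Mathlib

open Matrix

/-! Every `Γᵢ`, hence also `N = Σᵢ dᵢ Γᵢ`, solves the linear equation `ẋ = ε x × Ω`, so `Ṅ`
supplies exactly the missing `ε N × Ω` in `Ṁ`. A solution of `ẋ = x × Ω` has constant length
because `x × Ω ⊥ x`. -/

theorem HasDerivAt.sum_smul_of_linear {𝕜 F ι : Type*} [NontriviallyNormedField 𝕜]
    [NormedAddCommGroup F] [NormedSpace 𝕜 F] [Fintype ι] {Γ : ι → 𝕜 → F} {L : F →ₗ[𝕜] F}
    {t : 𝕜} (c : ι → 𝕜) (hΓ : ∀ i, HasDerivAt (Γ i) (L (Γ i t)) t) :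
    HasDerivAt (fun s => ∑ i, c i • Γ i s) (L (∑ i, c i • Γ i t)) t := by
  rw [map_sum]
  simp only [map_smul]
  exact HasDerivAt.fun_sum fun i _ => (hΓ i).const_smul (c i)

theorem HasDerivAt.dotProduct {𝕜 ι : Type*} [NontriviallyNormedField 𝕜] [Fintype ι]
    {f g : 𝕜 → ι → 𝕜} {f' g' : ι → 𝕜} {t : 𝕜} (hf : HasDerivAt f f' t) (hg : HasDerivAt g g' t) :
    HasDerivAt (fun s => f s ⬝ᵥ g s) (f' ⬝ᵥ g t + f t ⬝ᵥ g') t := by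
  have hfg := HasDerivAt.fun_sum (u := Finset.univ) fun j _ =>
    (hasDerivAt_pi.mp hf j).mul (hasDerivAt_pi.mp hg j)
  rw [_root_.dotProduct, _root_.dotProduct, ← Finset.sum_add_distrib]
  exact hfg

theorem dotProduct_self_eq_of_hasDerivAt_cross {X w : ℝ → Fin 3 → ℝ}
    (hX : ∀ t, HasDerivAt X (X t ⨯₃ w t) t) (s t : ℝ) :
    X s ⬝ᵥ X s = X t ⬝ᵥ X t := by
  have hderiv : ∀ u, HasDerivAt (fun s => X s ⬝ᵥ X s) 0 u := fun u => by
    simpa only [dotProduct_comm (X u ⨯₃ w u), dot_self_cross, add_zero] using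
      (hX u).dotProduct (hX u)
  exact is_const_of_deriv_eq_zero (fun u => (hderiv u).differentiableAt)
    (fun u => (hderiv u).deriv) s t

theorem spherical_ball_bearing_momentum_integral_general
    (n : ℕ) (ε : ℝ)
    (d : Fin n → ℝ)
    (Ω : ℝ → Fin 3 → ℝ)
    (Γ : Fin n → ℝ → Fin 3 → ℝ)
    (M N : ℝ → Fin 3 → ℝ)
    (hN : ∀ t : ℝ, N t = ∑ i : Fin n, d i • Γ i t)
    (hMdot : ∀ t : ℝ, HasDerivAt M (M t ⨯₃ Ω t + (1 - ε) • (N t ⨯₃ Ω t)) t)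
    (hΓdot : ∀ (i : Fin n) (t : ℝ), HasDerivAt (Γ i) (ε • (Γ i t ⨯₃ Ω t)) t) :
    (∀ t : ℝ, HasDerivAt (fun s => M s + N s) ((M t + N t) ⨯₃ Ω t) t) ∧
    (∀ s t : ℝ, (M s + N s) ⬝ᵥ (M s + N s) = (M t + N t) ⬝ᵥ (M t + N t)) := by
  have hNdot : ∀ t, HasDerivAt N (ε • (N t ⨯₃ Ω t)) t := fun t => by
    rw [hN t, funext hN]
    exact HasDerivAt.sum_smul_of_linear (L := ε • (crossProduct (R := ℝ)).flip (Ω t)) d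
      (hΓdot · t)
  have hX : ∀ t, HasDerivAt (fun s => M s + N s) ((M t + N t) ⨯₃ Ω t) t := fun t => by
    refine ((hMdot t).add (hNdot t)).congr_deriv ?_
    rw [map_add, LinearMap.add_apply]
    module
  exact ⟨hX, dotProduct_self_eq_of_hasDerivAt_cross hX⟩

/-- For the reduced spherical ball bearing system with `n` balls,
`Ṁ = M × Ω + (1 − ε) N × Ω`, `Γ̇ᵢ = ε Γᵢ × Ω`, where
`M = 𝕀Ω + Σᵢ Dᵢ (Ω − ⟨Γᵢ, Ω⟩ Γᵢ)` and `N = Σᵢ dᵢ Γᵢ`, one has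
`d/dt (M + N) = (M + N) × Ω`, and consequently `F₂ = ⟨M + N, M + N⟩` is a
first integral. -/
theorem spherical_ball_bearing_momentum_integral
    (n : ℕ) (hn : 1 ≤ n) (ε A B C : ℝ) (hA : 0 < A) (hB : 0 < B) (hC : 0 < C)
    (D d : Fin n → ℝ)
    (Ω : ℝ → Fin 3 → ℝ) (hΩ : Differentiable ℝ Ω)
    (Γ : Fin n → ℝ → Fin 3 → ℝ)
    (hunit : ∀ (i : Fin n) (t : ℝ), Γ i t ⬝ᵥ Γ i t = 1)
    (M N : ℝ → Fin 3 → ℝ)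
    (hM : ∀ t : ℝ, M t = (Matrix.diagonal ![A, B, C]).mulVec (Ω t)
        + ∑ i : Fin n, D i • (Ω t - (Γ i t ⬝ᵥ Ω t) • Γ i t))
    (hN : ∀ t : ℝ, N t = ∑ i : Fin n, d i • Γ i t)
    (hMdot : ∀ t : ℝ, HasDerivAt M (M t ⨯₃ Ω t + (1 - ε) • (N t ⨯₃ Ω t)) t)
    (hΓdot : ∀ (i : Fin n) (t : ℝ), HasDerivAt (Γ i) (ε • (Γ i t ⨯₃ Ω t)) t) :
    (∀ t : ℝ, HasDerivAt (fun s => M s + N s) ((M t + N t) ⨯₃ Ω t) t) ∧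
    (∀ s t : ℝ, (M s + N s) ⬝ᵥ (M s + N s) = (M t + N t) ⬝ᵥ (M t + N t)) :=
  spherical_ball_bearing_momentum_integral_general n ε d Ω Γ M N hN hMdot hΓdot
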